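/- Let E ∈ ℂ^{m×n} have full column rank (the linear map x ↦ E x is injective), and let C and C_k be m×m Hermitian positive definite complex matrices. Define G = C_k⁻¹ E (Eᴴ C_k⁻¹ E)⁻¹ Eᴴ C_k⁻¹. Then log(Re det(Eᴴ C⁻¹ E)) ≥ log(Re det(Eᴴ C_k⁻¹ E)) − Re(Tr(G (C − C_k))). -/

import Mathlib

/-!
Put `A = Eᴴ C_k⁻¹ E`, `P = Eᴴ C⁻¹ E` and `T = C_k⁻¹ E A⁻¹`. Then `Eᴴ T = 1`, `G = T Eᴴ C_k⁻¹`,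
`Tr (G C_k) = n` and `Tr (G C) = Tr (A Tᴴ C T)`. The Gauss–Markov inequality `P⁻¹ ≤ Tᴴ C T`
(the Schur complement of `P` in `[[Tᴴ C T, 1], [1, P]] = Nᴴ [[C, 1], [1, C⁻¹]] N` with
`N = diag (T, E)`) bounds this trace below by `Tr (A P⁻¹)`, and
`log det A - log det P ≤ Tr (A P⁻¹) - n` is `log λ ≤ λ - 1` applied to the eigenvalues of
`B P⁻¹ Bᴴ`, where `A = Bᴴ B`.
-/

open Matrix
open scoped ComplexOrder MatrixOrder

namespace Matrix

variable {𝕜 ι κ : Type*} [RCLike 𝕜] [Fintype ι] [DecidableEq ι] [Fintype κ] [DecidableEq κ]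

theorem PosSemidef.trace_mul_nonneg {A N : Matrix ι ι 𝕜} (hA : A.PosSemidef) (hN : N.PosSemidef) :
    0 ≤ (A * N).trace := by
  obtain ⟨B, rfl⟩ := CStarAlgebra.nonneg_iff_eq_star_mul_self.mp hA.nonneg
  rw [mul_assoc, trace_mul_comm]
  exact (hN.mul_mul_conjTranspose_same B).trace_nonneg

theorem PosSemidef.trace_mul_le_trace_mul {A X Y : Matrix ι ι 𝕜} (hA : A.PosSemidef)
    (hXY : X ≤ Y) : (A * X).trace ≤ (A * Y).trace := by
  simpa [mul_sub, trace_sub] using hA.trace_mul_nonneg hXY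

theorem PosDef.inv_conjTranspose_mul_inv_mul_le {C : Matrix κ κ 𝕜} (hC : C.PosDef)
    {E T : Matrix κ ι 𝕜} (hET : Eᴴ * T = 1) : (Eᴴ * C⁻¹ * E)⁻¹ ≤ Tᴴ * C * T := by
  have hTE : Tᴴ * E = 1 := by simpa using congrArg (·ᴴ) hET
  have hE : Function.Injective E.mulVec := fun x y hxy => by
    simpa [mulVec_mulVec, hTE] using congrArg (Tᴴ *ᵥ ·) hxy
  have hP := hC.inv.conjTranspose_mul_mul_same hE
  let := hC.isUnit.invertible
  let := hP.isUnit.invertible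
  have hblock : (fromBlocks C 1 1 C⁻¹).PosSemidef := by
    simpa using (PosDef.fromBlocks₁₁ (1 : Matrix κ κ 𝕜) C⁻¹ hC).mpr (by simpa using PosSemidef.zero)
  have hconj : (fromBlocks (Tᴴ * C * T) 1 1ᴴ (Eᴴ * C⁻¹ * E)).PosSemidef := by
    simpa [fromBlocks_conjTranspose, fromBlocks_multiply, hET, hTE] using
      hblock.conjTranspose_mul_mul_same (fromBlocks T 0 0 E)
  rw [le_iff]
  simpa using (PosDef.fromBlocks₂₂ (Tᴴ * C * T) 1 hP).mp hconj

open RCLike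

theorem PosDef.log_re_det_le_re_trace_sub_card {A : Matrix ι ι 𝕜} (hA : A.PosDef) :
    Real.log (re A.det) ≤ re A.trace - Fintype.card ι := by
  have hdet : re A.det = ∏ i, hA.isHermitian.eigenvalues i := by
    rw [hA.isHermitian.det_eq_prod_eigenvalues, ← ofReal_prod, ofReal_re]
  have htrace : re A.trace = ∑ i, hA.isHermitian.eigenvalues i := by
    rw [hA.isHermitian.trace_eq_sum_eigenvalues, ← ofReal_sum, ofReal_re]
  rw [hdet, htrace, Real.log_prod fun i _ => (hA.eigenvalues_pos i).ne']
  calc ∑ i, Real.log (hA.isHermitian.eigenvalues i)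
      ≤ ∑ i, (hA.isHermitian.eigenvalues i - 1) :=
        Finset.sum_le_sum fun i _ => Real.log_le_sub_one_of_pos (hA.eigenvalues_pos i)
    _ = _ := by simp [Finset.sum_sub_distrib]

theorem PosDef.log_re_det_add_log_re_det_le {H K : Matrix ι ι 𝕜} (hH : H.PosDef) (hK : K.PosDef) :
    Real.log (re H.det) + Real.log (re K.det) ≤ re (H * K).trace - Fintype.card ι := by
  obtain ⟨hH_re, -⟩ := pos_iff.mp hH.det_pos
  obtain ⟨hK_re, hK_im⟩ := pos_iff.mp hK.det_pos
  obtain ⟨B, rfl⟩ := CStarAlgebra.nonneg_iff_eq_star_mul_self.mp hH.posSemidef.nonneg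
  have hX : (B * K * star B).PosDef :=
    (isUnit_of_mul_isUnit_right hH.isUnit).posDef_star_right_conjugate_iff.mpr hK
  have htrace : (B * K * star B).trace = (star B * B * K).trace := by
    rw [trace_mul_comm, ← mul_assoc]
  have hdet : re (B * K * star B).det = re (star B * B).det * re K.det := by
    rw [show (B * K * star B).det = (star B * B).det * K.det by simp only [det_mul]; ring,
      mul_re, hK_im, mul_zero, sub_zero]
  have := hX.log_re_det_le_re_trace_sub_card
  rwa [htrace, hdet, Real.log_mul hH_re.ne' hK_re.ne'] at this

theorem PosDef.log_re_det_inv {A : Matrix ι ι 𝕜} (hA : A.PosDef) :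
    Real.log (re A⁻¹.det) = -Real.log (re A.det) := by
  obtain ⟨hre, him⟩ := pos_iff.mp hA.det_pos
  rw [det_nonsing_inv, Ring.inverse_eq_inv', inv_re, normSq_apply, him, mul_zero, add_zero,
    div_mul_cancel_left₀ hre.ne', Real.log_inv]

theorem PosDef.log_re_det_sub_log_re_det_le {H K : Matrix ι ι 𝕜} (hH : H.PosDef) (hK : K.PosDef) :
    Real.log (re H.det) - Real.log (re K.det) ≤ re (H * K⁻¹).trace - Fintype.card ι := by
  have := hH.log_re_det_add_log_re_det_le hK.inv
  rw [hK.log_re_det_inv] at this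
  linarith

end Matrix

/-- Minorization inequality of Lemma 2: with
`G = C_k⁻¹ E (Eᴴ C_k⁻¹ E)⁻¹ Eᴴ C_k⁻¹`, we have
`log (Re det (Eᴴ C⁻¹ E)) ≥ log (Re det (Eᴴ C_k⁻¹ E)) − Re (Tr (G (C − C_k)))`. -/
theorem stmt_6 (m n : ℕ) (E : Matrix (Fin m) (Fin n) ℂ)
    (hE : Function.Injective E.mulVec)
    (C Ck : Matrix (Fin m) (Fin m) ℂ) (hC : C.PosDef) (hCk : Ck.PosDef)
    (G : Matrix (Fin m) (Fin m) ℂ)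
    (hG : G = Ck⁻¹ * E * (Eᴴ * Ck⁻¹ * E)⁻¹ * Eᴴ * Ck⁻¹) :
    Real.log ((Eᴴ * C⁻¹ * E).det.re)
      ≥ Real.log ((Eᴴ * Ck⁻¹ * E).det.re) - ((G * (C - Ck)).trace).re := by
  set A := Eᴴ * Ck⁻¹ * E
  set P := Eᴴ * C⁻¹ * E
  have hA : A.PosDef := hCk.inv.conjTranspose_mul_mul_same hE
  have hP : P.PosDef := hC.inv.conjTranspose_mul_mul_same hE
  set T := Ck⁻¹ * E * A⁻¹
  have hET : Eᴴ * T = 1 := by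
    simp only [T, ← Matrix.mul_assoc]
    exact mul_nonsing_inv _ hA.det_pos.ne'.isUnit
  have hTH : Tᴴ = A⁻¹ * Eᴴ * Ck⁻¹ := by
    simp [T, conjTranspose_mul, hA.inv.isHermitian.eq, hCk.inv.isHermitian.eq, Matrix.mul_assoc]
  have htrace_C : (G * C).trace = (A * (Tᴴ * C * T)).trace := by
    rw [hG, hTH]
    simp only [Matrix.mul_assoc]
    rw [trace_mul_comm T, mul_nonsing_inv_cancel_left _ _ hA.det_pos.ne'.isUnit]
    simp only [Matrix.mul_assoc]
  have htrace_Ck : (G * Ck).trace = n := by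
    rw [hG, nonsing_inv_mul_cancel_right _ _ hCk.det_pos.ne'.isUnit, trace_mul_comm, hET]
    simp
  have hgm : (A * P⁻¹).trace ≤ (A * (Tᴴ * C * T)).trace :=
    hA.posSemidef.trace_mul_le_trace_mul (hC.inv_conjTranspose_mul_inv_mul_le hET)
  have hdiv := hA.log_re_det_sub_log_re_det_le hP
  simp only [RCLike.re_to_complex, Fintype.card_fin] at hdiv
  rw [mul_sub, trace_sub, htrace_C, htrace_Ck, Complex.sub_re, Complex.natCast_re]
  linarith [(Complex.le_def.mp hgm).1]
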